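/- arXiv:2209.15357 — 2 statements merged into one kernel-verified Lean document; each statement's English description precedes it below -/
import Mathlib

section
/- Let (Ω, 𝓕, P) be a probability space with a filtration (𝓕_t)_{t ≥ 0}, let X = (X_t)_{t ≥ 0} be an adapted real-valued process, and let v : [0, ∞) → [0, ∞) be such that X_0 has the centred Gaussian law N(0, v(0)), and for all 0 ≤ s ≤ t the increment X_t − X_s is independent of 𝓕_s and has the centred Gaussian law N(0, v(t) − v(s)) (in particular v is nondecreasing). Then for every integer m ≥ 1 the process t ↦ H_m(X_t; v(t)) is a martingale with respect to the filtration (𝓕_t)_{t ≥ 0}. -/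
open MeasureTheory ProbabilityTheory
open scoped NNReal

/-- The Hermite polynomial `H_m(·; C)` with variance `C`, defined recursively by
`H_0(x; C) = 1` and `H_{m+1}(x; C) = x·H_m(x; C) − C·(d/dx)H_m(x; C)`. -/
noncomputable def hermitePoly (C : ℝ) : ℕ → Polynomial ℝ
  | 0 => 1
  | m + 1 => Polynomial.X * hermitePoly C m - C • Polynomial.derivative (hermitePoly C m)

/-- `H m x C = H_m(x; C)`, the Hermite polynomial with variance `C` evaluated at `x`. -/
noncomputable def H (m : ℕ) (x C : ℝ) : ℝ := (hermitePoly C m).eval x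


open Polynomial Filter Real Set
open scoped ENNReal

lemma hermitePoly_succ (C : ℝ) (m : ℕ) :
    hermitePoly C (m + 1)
      = Polynomial.X * hermitePoly C m - C • Polynomial.derivative (hermitePoly C m) := rfl

lemma hermitePoly_derivative (C : ℝ) :
    ∀ m : ℕ, Polynomial.derivative (hermitePoly C m) = (m : ℝ) • hermitePoly C (m - 1)
  | 0 => by simp [hermitePoly]
  | (m + 1) => by
    have ih := hermitePoly_derivative C m
    rw [hermitePoly_succ]
    cases m with
    | zero => simp [hermitePoly]
    | succ k =>
      rw [Polynomial.derivative_sub, Polynomial.derivative_mul, Polynomial.derivative_X,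
        Polynomial.derivative_smul, ih]
      simp only [Nat.add_sub_cancel]
      rw [Polynomial.derivative_smul]
      simp only [hermitePoly_succ C k, Polynomial.smul_eq_C_mul]
      push_cast
      simp only [map_add, map_one, map_ofNat]
      ring

lemma integrable_pow_mul_exp_neg_mul_sq' {b : ℝ} (hb : 0 < b) (n : ℕ) :
    Integrable (fun x : ℝ => x ^ n * Real.exp (-b * x ^ 2)) := by
  have hb2 : 0 < b / 2 := by linarith
  refine (Integrable.const_mul (integrable_exp_neg_mul_sq hb2)
    ((n.factorial : ℝ) * Real.exp (1 / (2 * b)))).mono' ?_ ?_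
  · exact ((continuous_pow n).mul
      ((continuous_const.mul (continuous_pow 2)).rexp)).aestronglyMeasurable
  · refine Filter.Eventually.of_forall fun x => ?_
    have h1 : |x| ^ n ≤ (n.factorial : ℝ) * Real.exp |x| := by
      have h := Real.pow_div_factorial_le_exp _ (abs_nonneg x) n
      have hf : (0:ℝ) < n.factorial := by positivity
      calc |x| ^ n = (|x| ^ n / n.factorial) * n.factorial := by field_simp
        _ ≤ Real.exp |x| * n.factorial := by
            exact mul_le_mul_of_nonneg_right h hf.le
        _ = _ := by ring
    have hbb : b * (1/b) = 1 := mul_one_div_cancel hb.ne'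
    have hbb2 : b * (1 / (2 * b)) = 1 / 2 := by field_simp
    have key : 2 * b * |x| ≤ 1 + b ^ 2 * x ^ 2 := by
      nlinarith [sq_nonneg (b * |x| - 1), sq_abs x]
    have h2 : |x| ≤ 1 / (2 * b) + (b / 2) * x ^ 2 := by
      nlinarith [key, hbb2, hb]
    have hn : ‖x ^ n * Real.exp (-b * x ^ 2)‖ = |x| ^ n * Real.exp (-b * x ^ 2) := by
      rw [norm_mul, norm_pow, Real.norm_eq_abs, Real.norm_eq_abs,
        abs_of_pos (Real.exp_pos _)]
    rw [hn]
    calc |x| ^ n * Real.exp (-b * x ^ 2)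
        ≤ ((n.factorial : ℝ) * Real.exp |x|) * Real.exp (-b * x ^ 2) := by
          exact mul_le_mul_of_nonneg_right h1 (Real.exp_pos _).le
      _ ≤ (n.factorial : ℝ) * Real.exp (1 / (2 * b)) * Real.exp (-(b / 2) * x ^ 2) := by
          rw [mul_assoc, ← Real.exp_add, mul_assoc, ← Real.exp_add]
          refine mul_le_mul_of_nonneg_left ?_ (Nat.cast_nonneg _)
          rw [Real.exp_le_exp]
          nlinarith

lemma tendsto_pow_mul_exp_neg_mul_sq_atTop {b : ℝ} (hb : 0 < b) (n : ℕ) :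
    Tendsto (fun x : ℝ => x ^ n * Real.exp (-b * x ^ 2)) atTop (nhds 0) := by
  have h := rpow_mul_exp_neg_mul_sq_isLittleO_exp_neg hb (n : ℝ)
  have h2 : (fun x : ℝ => x ^ n * Real.exp (-b * x ^ 2)) =o[atTop]
      fun x : ℝ => Real.exp (-(1/2) * x) := by
    refine h.congr' ?_ EventuallyEq.rfl
    filter_upwards with x
    rw [Real.rpow_natCast]
  have h3 : Tendsto (fun x : ℝ => (1/2 : ℝ) * x) atTop atTop :=
    Tendsto.const_mul_atTop (by norm_num) tendsto_id
  have h4 : Tendsto (fun x : ℝ => -((1/2 : ℝ) * x)) atTop atBot :=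
    tendsto_neg_atTop_atBot.comp h3
  have h5 : Tendsto (fun x : ℝ => Real.exp (-(1/2) * x)) atTop (nhds (0:ℝ)) := by
    have h6 := Real.tendsto_exp_atBot.comp h4
    refine Tendsto.congr (fun x => ?_) h6
    simp [Function.comp, neg_mul]
  exact h2.tendsto_zero_of_tendsto h5

lemma tendsto_pow_mul_exp_neg_mul_sq_atBot {b : ℝ} (hb : 0 < b) (n : ℕ) :
    Tendsto (fun x : ℝ => x ^ n * Real.exp (-b * x ^ 2)) atBot (nhds 0) := by
  have h : Tendsto (fun x : ℝ => (-1 : ℝ) ^ n * ((-x) ^ n * Real.exp (-b * (-x) ^ 2)))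
      atBot (nhds 0) := by
    have := (tendsto_pow_mul_exp_neg_mul_sq_atTop hb n).comp tendsto_neg_atBot_atTop
    simpa using (this.const_mul ((-1:ℝ) ^ n))
  refine h.congr fun x => ?_
  have h2 : (-x : ℝ) ^ 2 = x ^ 2 := by ring
  have h3 : (-1 : ℝ) ^ n * (-x) ^ n = x ^ n := by rw [← mul_pow]; norm_num
  rw [h2, ← mul_assoc, h3]

lemma integral_deriv_zero {g g' : ℝ → ℝ} (hd : ∀ x, HasDerivAt g (g' x) x)
    (hi : Integrable g') (ht : Tendsto g atTop (nhds 0)) (hb : Tendsto g atBot (nhds 0)) :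
    ∫ x, g' x = 0 := by
  rw [← intervalIntegral.integral_Iic_add_Ioi (b := (0:ℝ)) hi.integrableOn hi.integrableOn,
    MeasureTheory.integral_Ioi_of_hasDerivAt_of_tendsto' (fun x _ => hd x) hi.integrableOn ht,
    MeasureTheory.integral_Iic_of_hasDerivAt_of_tendsto' (fun x _ => hd x) hi.integrableOn hb]
  ring

-- step for the Lebesgue-level recursion

lemma integral_pow_mul_exp_step {b : ℝ} (hb : 0 < b) (n : ℕ) :
    ∫ x : ℝ, x ^ (n + 2) * Real.exp (-b * x ^ 2)
      = ((n + 1 : ℝ) / (2 * b)) * ∫ x : ℝ, x ^ n * Real.exp (-b * x ^ 2) := by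
  set g : ℝ → ℝ := fun x => x ^ (n + 1) * Real.exp (-b * x ^ 2) with hg
  set g' : ℝ → ℝ := fun x =>
    (n + 1 : ℝ) * x ^ n * Real.exp (-b * x ^ 2) - 2 * b * (x ^ (n + 2) * Real.exp (-b * x ^ 2))
    with hg'
  have hd : ∀ x, HasDerivAt g (g' x) x := by
    intro x
    have h1 : HasDerivAt (fun x : ℝ => x ^ (n + 1)) ((n + 1 : ℝ) * x ^ n) x := by
      simpa using hasDerivAt_pow (n + 1) x
    have h2 : HasDerivAt (fun x : ℝ => Real.exp (-b * x ^ 2))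
        ((-b * (2 * x)) * Real.exp (-b * x ^ 2)) x := by
      have hx : HasDerivAt (fun x : ℝ => -b * x ^ 2) (-b * (2 * x)) x := by
        simpa using ((hasDerivAt_pow 2 x).const_mul (-b))
      simpa [mul_comm] using hx.exp
    have : HasDerivAt g ((n + 1 : ℝ) * x ^ n * Real.exp (-b * x ^ 2)
        + x ^ (n + 1) * ((-b * (2 * x)) * Real.exp (-b * x ^ 2))) x := h1.mul h2
    convert this using 1
    simp only [hg']
    ring
  have hi1 : Integrable (fun x : ℝ => (n + 1 : ℝ) * x ^ n * Real.exp (-b * x ^ 2)) := by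
    simpa [mul_assoc] using (integrable_pow_mul_exp_neg_mul_sq' hb n).const_mul ((n:ℝ) + 1)
  have hi2 : Integrable (fun x : ℝ => 2 * b * (x ^ (n + 2) * Real.exp (-b * x ^ 2))) :=
    (integrable_pow_mul_exp_neg_mul_sq' hb (n + 2)).const_mul (2 * b)
  have hi : Integrable g' := by
    refine (hi1.sub hi2).congr ?_
    filter_upwards with x
    simp [hg']
  have h0 : ∫ x, g' x = 0 :=
    integral_deriv_zero hd hi (tendsto_pow_mul_exp_neg_mul_sq_atTop hb (n+1))
      (tendsto_pow_mul_exp_neg_mul_sq_atBot hb (n+1))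
  have hsplit : ∫ x, g' x = (n + 1 : ℝ) * (∫ x : ℝ, x ^ n * Real.exp (-b * x ^ 2))
      - 2 * b * ∫ x : ℝ, x ^ (n + 2) * Real.exp (-b * x ^ 2) := by
    rw [hg', integral_sub hi1 hi2, integral_const_mul]
    congr 1
    simp_rw [mul_assoc]
    exact integral_const_mul _ _
  rw [hsplit] at h0
  have h2b : (2 * b) ≠ 0 := by positivity
  field_simp at h0 ⊢
  linarith

lemma integral_pow_one_mul_exp {b : ℝ} (hb : 0 < b) :
    ∫ x : ℝ, x ^ 1 * Real.exp (-b * x ^ 2) = 0 := by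
  have hd : ∀ x : ℝ, HasDerivAt (fun x : ℝ => Real.exp (-b * x ^ 2))
      (-(2*b) * (x ^ 1 * Real.exp (-b * x ^ 2))) x := by
    intro x
    have hx : HasDerivAt (fun x : ℝ => -b * x ^ 2) (-b * (2 * x)) x := by
      simpa using ((hasDerivAt_pow 2 x).const_mul (-b))
    have := hx.exp
    convert this using 1
    ring
  have hi : Integrable (fun x : ℝ => -(2*b) * (x ^ 1 * Real.exp (-b * x ^ 2))) :=
    (integrable_pow_mul_exp_neg_mul_sq' hb 1).const_mul _
  have ht : Tendsto (fun x : ℝ => Real.exp (-b * x ^ 2)) atTop (nhds 0) := by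
    simpa using tendsto_pow_mul_exp_neg_mul_sq_atTop hb 0
  have htb : Tendsto (fun x : ℝ => Real.exp (-b * x ^ 2)) atBot (nhds 0) := by
    simpa using tendsto_pow_mul_exp_neg_mul_sq_atBot hb 0
  have h0 := integral_deriv_zero hd hi ht htb
  rw [integral_const_mul] at h0
  have hne : -(2*b) ≠ 0 := ne_of_lt (by linarith)
  rcases mul_eq_zero.1 h0 with h | h
  · exact absurd h hne
  · exact h

lemma gaussianPDF_eq_coe (D : ℝ≥0) :
    gaussianPDF 0 D = fun x => ((gaussianPDFReal 0 D x).toNNReal : ℝ≥0∞) := by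
  funext x
  rw [gaussianPDF]
  rfl

lemma integral_gaussianReal_pdf {D : ℝ≥0} (hD : D ≠ 0) (f : ℝ → ℝ) :
    ∫ y, f y ∂(gaussianReal 0 D) = ∫ y, gaussianPDFReal 0 D y * f y := by
  rw [gaussianReal_of_var_ne_zero 0 hD, gaussianPDF_eq_coe,
    integral_withDensity_eq_integral_smul (measurable_gaussianPDFReal 0 D).real_toNNReal f]
  congr 1 with y
  simp [NNReal.smul_def, Real.coe_toNNReal _ (gaussianPDFReal_nonneg 0 D y)]

lemma integrable_gaussianReal_iff {D : ℝ≥0} (hD : D ≠ 0) {f : ℝ → ℝ} :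
    Integrable f (gaussianReal 0 D) ↔ Integrable (fun y => gaussianPDFReal 0 D y * f y) := by
  rw [gaussianReal_of_var_ne_zero 0 hD, gaussianPDF_eq_coe,
    integrable_withDensity_iff_integrable_smul (measurable_gaussianPDFReal 0 D).real_toNNReal]
  constructor <;> intro h <;> refine h.congr ?_ <;> filter_upwards with y <;>
    simp [NNReal.smul_def, Real.coe_toNNReal _ (gaussianPDFReal_nonneg 0 D y)]

lemma gaussianPDFReal_zero_mean (D : ℝ≥0) (y : ℝ) :
    gaussianPDFReal 0 D y = (√(2 * π * D))⁻¹ * Real.exp (-(2 * (D:ℝ))⁻¹ * y ^ 2) := by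
  rw [gaussianPDFReal]
  congr 1
  congr 1
  ring

lemma integrable_pow_gaussianReal (D : ℝ≥0) (n : ℕ) :
    Integrable (fun y : ℝ => y ^ n) (gaussianReal 0 D) := by
  by_cases hD : D = 0
  · subst hD
    rw [gaussianReal_zero_var]
    refine ⟨(measurable_id.pow_const n).aestronglyMeasurable, ?_⟩
    rw [HasFiniteIntegral, lintegral_dirac]
    exact ENNReal.coe_lt_top
  · rw [integrable_gaussianReal_iff hD]
    have hDpos : (0:ℝ) < (D:ℝ) := NNReal.coe_pos.mpr (zero_lt_iff.mpr hD)
    have hb : (0:ℝ) < (2 * (D:ℝ))⁻¹ := inv_pos.mpr (by linarith)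
    refine ((integrable_pow_mul_exp_neg_mul_sq' hb n).const_mul ((√(2 * π * D))⁻¹)).congr ?_
    filter_upwards with y
    rw [gaussianPDFReal_zero_mean]
    ring

lemma gauss_moment_one (D : ℝ≥0) : ∫ y, y ^ 1 ∂(gaussianReal 0 D) = 0 := by
  by_cases hD : D = 0
  · subst hD; rw [gaussianReal_zero_var, integral_dirac]; norm_num
  · have hDpos : (0:ℝ) < (D:ℝ) := NNReal.coe_pos.mpr (zero_lt_iff.mpr hD)
    have hb : (0:ℝ) < (2 * (D:ℝ))⁻¹ := inv_pos.mpr (by linarith)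
    rw [integral_gaussianReal_pdf hD]
    have : ∀ y : ℝ, gaussianPDFReal 0 D y * y ^ 1
        = (√(2 * π * D))⁻¹ * (y ^ 1 * Real.exp (-(2 * (D:ℝ))⁻¹ * y ^ 2)) := by
      intro y; rw [gaussianPDFReal_zero_mean]; ring
    simp only [this]
    rw [integral_const_mul, integral_pow_one_mul_exp hb, mul_zero]

lemma gauss_moment_step (D : ℝ≥0) (n : ℕ) :
    ∫ y, y ^ (n + 2) ∂(gaussianReal 0 D)
      = (D : ℝ) * (n + 1) * ∫ y, y ^ n ∂(gaussianReal 0 D) := by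
  by_cases hD : D = 0
  · subst hD; rw [gaussianReal_zero_var, integral_dirac]; norm_num
  · have hDpos : (0:ℝ) < (D:ℝ) := NNReal.coe_pos.mpr (zero_lt_iff.mpr hD)
    have hb : (0:ℝ) < (2 * (D:ℝ))⁻¹ := inv_pos.mpr (by linarith)
    rw [integral_gaussianReal_pdf hD, integral_gaussianReal_pdf hD]
    have h1 : ∀ k : ℕ, ∀ y : ℝ, gaussianPDFReal 0 D y * y ^ k
        = (√(2 * π * D))⁻¹ * (y ^ k * Real.exp (-(2 * (D:ℝ))⁻¹ * y ^ 2)) := by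
      intro k y; rw [gaussianPDFReal_zero_mean]; ring
    simp only [h1]
    rw [integral_const_mul, integral_const_mul, integral_pow_mul_exp_step hb n]
    have hD' : (D:ℝ) ≠ 0 := ne_of_gt hDpos
    have : ((n:ℝ) + 1) / (2 * (2 * (D:ℝ))⁻¹) = (D:ℝ) * (n + 1) := by
      field_simp
    rw [this]
    ring

lemma integrable_polyEval (D : ℝ≥0) (p : Polynomial ℝ) :
    Integrable (fun y => p.eval y) (gaussianReal 0 D) := by
  induction p using Polynomial.induction_on' with
  | add p q hp hq =>
    refine (hp.add hq).congr ?_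
    filter_upwards with y
    simp
  | monomial n a =>
    refine ((integrable_pow_gaussianReal D n).const_mul a).congr ?_
    filter_upwards with y
    simp [Polynomial.eval_monomial]

lemma integrable_polyEval_shift (D : ℝ≥0) (p : Polynomial ℝ) (x : ℝ) :
    Integrable (fun y => p.eval (x + y)) (gaussianReal 0 D) := by
  refine (integrable_polyEval D (p.comp (Polynomial.C x + Polynomial.X))).congr ?_
  filter_upwards with y
  simp [Polynomial.eval_comp]

lemma stein (D : ℝ≥0) (p : Polynomial ℝ) :
    ∫ y, y * p.eval y ∂(gaussianReal 0 D)
      = (D : ℝ) * ∫ y, (Polynomial.derivative p).eval y ∂(gaussianReal 0 D) := by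
  induction p using Polynomial.induction_on' with
  | add p q hp hq =>
    have Ip : Integrable (fun y => y * p.eval y) (gaussianReal 0 D) := by
      refine (integrable_polyEval D (Polynomial.X * p)).congr ?_
      filter_upwards with y; simp
    have Iq : Integrable (fun y => y * q.eval y) (gaussianReal 0 D) := by
      refine (integrable_polyEval D (Polynomial.X * q)).congr ?_
      filter_upwards with y; simp
    have h1 : ∀ y : ℝ, y * (p + q).eval y = y * p.eval y + y * q.eval y := by
      intro y; simp; ring
    simp only [h1]
    rw [integral_add Ip Iq, hp, hq, Polynomial.derivative_add]
    have h2 : ∀ y : ℝ, (Polynomial.derivative p + Polynomial.derivative q).eval y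
        = (Polynomial.derivative p).eval y + (Polynomial.derivative q).eval y := by
      intro y; simp
    simp only [h2]
    rw [integral_add (integrable_polyEval D _) (integrable_polyEval D _)]
    ring
  | monomial n a =>
    have h1 : ∀ y : ℝ, y * ((Polynomial.monomial n) a).eval y = a * y ^ (n + 1) := by
      intro y; simp [Polynomial.eval_monomial]; ring
    simp only [h1]
    rw [integral_const_mul]
    rw [Polynomial.derivative_monomial]
    have h2 : ∀ y : ℝ, ((Polynomial.monomial (n - 1)) (a * n)).eval y = a * n * y ^ (n - 1) := by
      intro y; simp [Polynomial.eval_monomial]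
    simp only [h2]
    rw [integral_const_mul]
    cases n with
    | zero =>
      have h := gauss_moment_one D
      simp only [pow_one] at h
      simp [h]
    | succ k =>
      have := gauss_moment_step D k
      rw [show k + 1 + 1 = k + 2 from rfl, this]
      simp only [Nat.add_sub_cancel]
      push_cast
      ring

lemma key_succ (D : ℝ≥0) (C : ℝ) (j : ℕ)
    (h1 : ∀ x : ℝ, ∫ y, (hermitePoly (C + D) (j - 1)).eval (x + y) ∂(gaussianReal 0 D)
        = (hermitePoly C (j - 1)).eval x)
    (h2 : ∀ x : ℝ, ∫ y, (hermitePoly (C + D) j).eval (x + y) ∂(gaussianReal 0 D)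
        = (hermitePoly C j).eval x) :
    ∀ x : ℝ, ∫ y, (hermitePoly (C + D) (j + 1)).eval (x + y) ∂(gaussianReal 0 D)
        = (hermitePoly C (j + 1)).eval x := by
  intro x
  set γ := gaussianReal 0 D with hγ
  set E := C + (D : ℝ) with hE
  have hder := hermitePoly_derivative E j
  have expand : ∀ y : ℝ, (hermitePoly E (j + 1)).eval (x + y)
      = ((x + y) * (hermitePoly E j).eval (x + y)
        - E * ((j : ℝ) * (hermitePoly E (j - 1)).eval (x + y))) := by
    intro y
    rw [hermitePoly_succ, Polynomial.eval_sub, Polynomial.eval_mul, Polynomial.eval_X,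
      Polynomial.eval_smul, hder, Polynomial.eval_smul]
    simp [smul_eq_mul]
  simp only [expand]
  -- integrabilities
  have Ia : Integrable (fun y => (x + y) * (hermitePoly E j).eval (x + y)) γ := by
    refine (integrable_polyEval D (((Polynomial.C x + Polynomial.X)) *
      ((hermitePoly E j).comp (Polynomial.C x + Polynomial.X)))).congr ?_
    filter_upwards with y
    simp [Polynomial.eval_comp]
  have Ib : Integrable (fun y => E * ((j : ℝ) * (hermitePoly E (j - 1)).eval (x + y))) γ :=
    ((integrable_polyEval_shift D _ x).const_mul _).const_mul _
  rw [integral_sub Ia Ib]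
  have Ix : Integrable (fun y => x * (hermitePoly E j).eval (x + y)) γ :=
    (integrable_polyEval_shift D _ x).const_mul _
  have Iy : Integrable (fun y => y * (hermitePoly E j).eval (x + y)) γ := by
    refine (integrable_polyEval D (Polynomial.X *
      ((hermitePoly E j).comp (Polynomial.C x + Polynomial.X)))).congr ?_
    filter_upwards with y
    simp [Polynomial.eval_comp]
  have hsplit : ∀ y : ℝ, (x + y) * (hermitePoly E j).eval (x + y)
      = x * (hermitePoly E j).eval (x + y) + y * (hermitePoly E j).eval (x + y) := by
    intro y; ring
  simp only [hsplit]
  rw [integral_add Ix Iy, integral_const_mul, h2]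
  -- Stein on the middle term
  have hyint : ∫ y, y * (hermitePoly E j).eval (x + y) ∂γ
      = (D : ℝ) * ((j : ℝ) * (hermitePoly C (j - 1)).eval x) := by
    have hs := stein D ((hermitePoly E j).comp (Polynomial.C x + Polynomial.X))
    have e1 : ∀ y : ℝ, ((hermitePoly E j).comp (Polynomial.C x + Polynomial.X)).eval y
        = (hermitePoly E j).eval (x + y) := by
      intro y; simp [Polynomial.eval_comp]
    have e2 : ∀ y : ℝ,
        (Polynomial.derivative ((hermitePoly E j).comp (Polynomial.C x + Polynomial.X))).eval y
        = (j : ℝ) * (hermitePoly E (j - 1)).eval (x + y) := by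
      intro y
      rw [Polynomial.derivative_comp, hder]
      simp [Polynomial.eval_comp, smul_eq_mul]
    simp only [e1, e2] at hs
    rw [hs, integral_const_mul, h1 x]
  rw [hyint]
  -- last term
  rw [integral_const_mul, integral_const_mul, h1 x]
  -- RHS
  rw [hermitePoly_succ, Polynomial.eval_sub, Polynomial.eval_mul, Polynomial.eval_X,
    Polynomial.eval_smul, hermitePoly_derivative C j, Polynomial.eval_smul]
  simp only [smul_eq_mul, hE]
  ring

lemma hermite_key (D : ℝ≥0) (C : ℝ) (m : ℕ) :
    ∀ x : ℝ, ∫ y, (hermitePoly (C + D) m).eval (x + y) ∂(gaussianReal 0 D)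
        = (hermitePoly C m).eval x := by
  have base0 : ∀ x : ℝ, ∫ y, (hermitePoly (C + D) 0).eval (x + y) ∂(gaussianReal 0 D)
      = (hermitePoly C 0).eval x := by
    intro x
    simp [hermitePoly]
  have main : ∀ k : ℕ,
      (∀ x : ℝ, ∫ y, (hermitePoly (C + D) k).eval (x + y) ∂(gaussianReal 0 D)
        = (hermitePoly C k).eval x)
      ∧ (∀ x : ℝ, ∫ y, (hermitePoly (C + D) (k+1)).eval (x + y) ∂(gaussianReal 0 D)
        = (hermitePoly C (k+1)).eval x) := by
    intro k
    induction k with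
    | zero => exact ⟨base0, key_succ D C 0 base0 base0⟩
    | succ i ih =>
      refine ⟨ih.2, key_succ D C (i + 1) ?_ ih.2⟩
      simpa using ih.1
  exact (main m).1

lemma eventuallyEq_finset_sum {α β γ : Type*} [AddCommMonoid γ] {l : Filter β}
    (s : Finset α) (f g : α → β → γ) (h : ∀ i ∈ s, f i =ᶠ[l] g i) :
    (∑ i ∈ s, f i) =ᶠ[l] (∑ i ∈ s, g i) := by
  classical
  induction s using Finset.induction_on with
  | empty => simp
  | insert _ _ hx ih =>
    rw [Finset.sum_insert hx, Finset.sum_insert hx]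
    exact (h _ (Finset.mem_insert_self _ _)).add
      (ih fun i hi => h i (Finset.mem_insert_of_mem hi))

lemma poly_taylor_sum (q : Polynomial ℝ) (x y : ℝ) :
    q.eval (x + y) = ∑ k ∈ Finset.range (q.natDegree + 1),
      (Polynomial.hasseDeriv k q).eval x * y ^ k := by
  have h1 : q.eval (x + y) = ((Polynomial.taylor x) q).eval y := by
    rw [Polynomial.taylor_eval, add_comm]
  rw [h1, Polynomial.eval_eq_sum_range, Polynomial.natDegree_taylor]
  exact Finset.sum_congr rfl fun k _ => by rw [Polynomial.taylor_coeff]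

lemma hermite_key_sum (D : ℝ≥0) (C : ℝ) (m : ℕ) (x : ℝ) :
    ∑ k ∈ Finset.range ((hermitePoly (C + D) m).natDegree + 1),
      (Polynomial.hasseDeriv k (hermitePoly (C + D) m)).eval x
        * (∫ y, y ^ k ∂(gaussianReal 0 D))
    = (hermitePoly C m).eval x := by
  have h1 : ∀ k, (Polynomial.hasseDeriv k (hermitePoly (C + D) m)).eval x
      * (∫ y, y ^ k ∂(gaussianReal 0 D))
      = ∫ y, (Polynomial.hasseDeriv k (hermitePoly (C + D) m)).eval x * y ^ k
          ∂(gaussianReal 0 D) := fun k => (integral_const_mul _ _).symm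
  calc ∑ k ∈ Finset.range ((hermitePoly (C + D) m).natDegree + 1),
        (Polynomial.hasseDeriv k (hermitePoly (C + D) m)).eval x
          * (∫ y, y ^ k ∂(gaussianReal 0 D))
      = ∑ k ∈ Finset.range ((hermitePoly (C + D) m).natDegree + 1),
        ∫ y, (Polynomial.hasseDeriv k (hermitePoly (C + D) m)).eval x * y ^ k
          ∂(gaussianReal 0 D) := Finset.sum_congr rfl fun k _ => h1 k
    _ = ∫ y, ∑ k ∈ Finset.range ((hermitePoly (C + D) m).natDegree + 1),
        (Polynomial.hasseDeriv k (hermitePoly (C + D) m)).eval x * y ^ k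
          ∂(gaussianReal 0 D) := by
        rw [integral_finset_sum]
        exact fun k _ => (integrable_pow_gaussianReal D k).const_mul _
    _ = ∫ y, (hermitePoly (C + D) m).eval (x + y) ∂(gaussianReal 0 D) := by
        congr 1 with y
        rw [poly_taylor_sum]
    _ = (hermitePoly C m).eval x := hermite_key D C m x

/-- Martingale property of Hermite polynomials: if `X` is an adapted process with
`X_0 ∼ N(0, v(0))` and, for `s ≤ t`, the increment `X_t − X_s` independent of `𝓕_s`
with law `N(0, v(t) − v(s))` (`v` nondecreasing), then for every `m ≥ 1` the process
`t ↦ H_m(X_t; v(t))` is a martingale with respect to the filtration `(𝓕_t)_{t ≥ 0}`. -/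
theorem hermite_martingale {Ω : Type*} {m0 : MeasurableSpace Ω} (P : Measure Ω)
    [IsProbabilityMeasure P] (ℱ : Filtration ℝ≥0 m0)
    (X : ℝ≥0 → Ω → ℝ) (hX : ∀ t, Measurable (X t)) (hadp : Adapted ℱ X)
    (v : ℝ≥0 → ℝ≥0) (hv : Monotone v)
    (h0 : P.map (X 0) = gaussianReal 0 (v 0))
    (hincr_indep : ∀ s t : ℝ≥0, s ≤ t →
      Indep (MeasurableSpace.comap (fun ω => X t ω - X s ω) inferInstance) (ℱ s) P)
    (hincr_law : ∀ s t : ℝ≥0, s ≤ t →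
      P.map (fun ω => X t ω - X s ω) = gaussianReal 0 (v t - v s))
    (m : ℕ) (hm : 1 ≤ m) :
    Martingale (fun t ω => H m (X t ω) (v t : ℝ)) ℱ P := by
  -- integrability of powers of increments
  have hYint : ∀ s t : ℝ≥0, s ≤ t → ∀ k : ℕ,
      Integrable (fun ω => (X t ω - X s ω) ^ k) P := by
    intro s t hst k
    have hmeas : Measurable fun ω => X t ω - X s ω := (hX t).sub (hX s)
    have h := integrable_pow_gaussianReal (v t - v s) k
    rw [← hincr_law s t hst] at h
    exact (integrable_map_measure ((measurable_id.pow_const k).aestronglyMeasurable)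
      hmeas.aemeasurable).mp h
  -- independence of functions of the increment from ℱ s–measurable functions
  have hIndep : ∀ s t : ℝ≥0, s ≤ t → ∀ (q : Polynomial ℝ) (k : ℕ),
      IndepFun (fun ω => q.eval (X s ω)) (fun ω => (X t ω - X s ω) ^ k) P := by
    intro s t hst q k
    have h := hincr_indep s t hst
    have h2 : MeasurableSpace.comap (X s) inferInstance ≤ ℱ s := (hadp s).comap_le
    have hIF : IndepFun (fun ω => X t ω - X s ω) (X s) P :=
      ProbabilityTheory.indep_of_indep_of_le_right h h2
    exact (hIF.symm.comp (Polynomial.continuous q).measurable (measurable_id.pow_const k))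
  -- integrability of polynomials of X s
  have hXpoly : ∀ (s : ℝ≥0) (q : Polynomial ℝ), Integrable (fun ω => q.eval (X s ω)) P := by
    intro s q
    have hX0poly : ∀ r : Polynomial ℝ, Integrable (fun ω => r.eval (X 0 ω)) P := by
      intro r
      have h := integrable_polyEval (v 0) r
      rw [← h0] at h
      exact (integrable_map_measure (Polynomial.continuous r).measurable.aestronglyMeasurable
        (hX 0).aemeasurable).mp h
    have hdecomp : ∀ ω, q.eval (X s ω) = ∑ k ∈ Finset.range (q.natDegree + 1),
        (Polynomial.hasseDeriv k q).eval (X 0 ω) * (X s ω - X 0 ω) ^ k := by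
      intro ω
      rw [show X s ω = X 0 ω + (X s ω - X 0 ω) by ring, poly_taylor_sum]
      simp [add_sub_cancel_left]
    simp only [hdecomp]
    refine integrable_finset_sum _ fun k _ => ?_
    exact (hIndep 0 s zero_le (Polynomial.hasseDeriv k q) k).integrable_mul
      (hX0poly _) (hYint 0 s zero_le k)
  constructor
  · -- adapted
    intro t
    exact (Polynomial.continuous (hermitePoly (v t) m)).comp_stronglyMeasurable (hadp t).stronglyMeasurable
  · -- conditional expectation
    intro s t hst
    show P[fun ω => H m (X t ω) ((v t : ℝ)) | ℱ s] =ᵐ[P] fun ω => H m (X s ω) ((v s : ℝ))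
    have hpowm : ∀ k : ℕ, Measurable (fun y : ℝ => y ^ k) := fun k =>
      measurable_id.pow_const k
    set D : ℝ≥0 := v t - v s with hD
    have hE : (v t : ℝ) = (v s : ℝ) + (D : ℝ) := by
      rw [hD, NNReal.coe_sub (hv hst)]; ring
    set p : Polynomial ℝ := hermitePoly (v t) m with hp
    set N : ℕ := p.natDegree with hN
    set Y : Ω → ℝ := fun ω => X t ω - X s ω with hY
    have hYmeas : Measurable Y := (hX t).sub (hX s)
    have hYlaw : P.map Y = gaussianReal 0 D := hincr_law s t hst
    -- pointwise expansion
    have hsum : (fun ω => H m (X t ω) (v t : ℝ))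
        = fun ω => ∑ k ∈ Finset.range (N + 1),
            (Polynomial.hasseDeriv k p).eval (X s ω) * Y ω ^ k := by
      funext ω
      rw [H, show X t ω = X s ω + Y ω by rw [hY]; ring, poly_taylor_sum]
    -- integrability of summands
    have hterm_int : ∀ k ∈ Finset.range (N + 1),
        Integrable (fun ω => (Polynomial.hasseDeriv k p).eval (X s ω) * Y ω ^ k) P :=
      fun k _ => (hIndep s t hst (Polynomial.hasseDeriv k p) k).integrable_mul
        (hXpoly s _) (hYint s t hst k)
    -- conditional expectation of each summand
    have hcond : ∀ k ∈ Finset.range (N + 1),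
        P[fun ω => (Polynomial.hasseDeriv k p).eval (X s ω) * Y ω ^ k | ℱ s]
          =ᵐ[P] fun ω => (Polynomial.hasseDeriv k p).eval (X s ω)
            * ∫ y, y ^ k ∂(gaussianReal 0 D) := by
      intro k hk
      have hgk : StronglyMeasurable[ℱ s] fun ω => (Polynomial.hasseDeriv k p).eval (X s ω) :=
        (Polynomial.continuous _).comp_stronglyMeasurable (hadp s).stronglyMeasurable
      have hmul := condExp_mul_of_stronglyMeasurable_left hgk
        (by simpa [Pi.mul_def] using hterm_int k hk) (hYint s t hst k)
      refine hmul.trans ?_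
      have hYk : StronglyMeasurable[MeasurableSpace.comap Y inferInstance]
          fun ω => Y ω ^ k := by
        have hbase : Measurable[MeasurableSpace.comap Y inferInstance] Y :=
          measurable_iff_comap_le.mpr le_rfl
        exact (Measurable.stronglyMeasurable (by exact (hpowm k).comp hbase))
      have hci := condExp_indep_eq hYmeas.comap_le (ℱ.le s) hYk (hincr_indep s t hst)
      have hIk : ∫ ω, Y ω ^ k ∂P = ∫ y, y ^ k ∂(gaussianReal 0 D) := by
        rw [← hYlaw, integral_map hYmeas.aemeasurable (hpowm k).aestronglyMeasurable]
      filter_upwards [hci] with ω hω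
      simp only [Pi.mul_apply]
      exact congrArg _ (hω.trans hIk)
    -- put everything together
    rw [hsum]
    have h1 : (fun ω => ∑ k ∈ Finset.range (N + 1),
        (Polynomial.hasseDeriv k p).eval (X s ω) * Y ω ^ k)
        = ∑ k ∈ Finset.range (N + 1),
          fun ω => (Polynomial.hasseDeriv k p).eval (X s ω) * Y ω ^ k := by
      funext ω; rw [Finset.sum_apply]
    rw [h1]
    refine (condExp_finsetSum hterm_int _).trans ?_
    have h2 : ∑ k ∈ Finset.range (N + 1),
        P[fun ω => (Polynomial.hasseDeriv k p).eval (X s ω) * Y ω ^ k | ℱ s]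
        =ᵐ[P] ∑ k ∈ Finset.range (N + 1),
          fun ω => (Polynomial.hasseDeriv k p).eval (X s ω)
            * ∫ y, y ^ k ∂(gaussianReal 0 D) := by
      exact eventuallyEq_finset_sum _ _ _ hcond
    refine h2.trans ?_
    refine Filter.Eventually.of_forall fun ω => ?_
    rw [Finset.sum_apply]
    have h3 : p = hermitePoly ((v s : ℝ) + (D : ℝ)) m := by rw [hp, hE]
    have h4 := hermite_key_sum D (v s : ℝ) m (X s ω)
    simp only [H]
    rw [← h4]
    have h5 : N = (hermitePoly ((v s : ℝ) + (D : ℝ)) m).natDegree := by rw [hN, h3]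
    refine Finset.sum_congr (by rw [h5]) fun k hk => ?_
    rw [h3]
end

section
/- Let n ≥ 1 be an integer, let A₀, …, A_n, b, c, y be real numbers and C ≥ 0. Define a = Σ_{i=1}^{n} i·A_i·c^{i−1}, Â₁ = Σ_{i=2}^{n} i·A_i·(b^{i−1} − c^{i−1}), and Â_j = Σ_{i=j}^{n} (i choose j)·A_i·b^{i−j} for 2 ≤ j ≤ n. Then Σ_{i=0}^{n} A_i·H_i(b + y; C) − Σ_{i=0}^{n} A_i·b^i = a·y + Â₁·H₁(y; C) + Σ_{j=2}^{n} Â_j·H_j(y; C). -/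
lemma hermite_deriv (C : ℝ) : ∀ m : ℕ,
    Polynomial.derivative (hermitePoly C (m + 1)) = (m + 1 : ℕ) • hermitePoly C m := by
  intro m
  induction m with
  | zero => simp [hermitePoly]
  | succ n ih =>
    rw [show hermitePoly C (n + 2) =
      Polynomial.X * hermitePoly C (n+1) - C • Polynomial.derivative (hermitePoly C (n+1)) from rfl]
    rw [Polynomial.derivative_sub, Polynomial.derivative_mul, Polynomial.derivative_X,
      Polynomial.derivative_smul, ih]
    rw [Polynomial.derivative_smul]
    rw [show hermitePoly C (n + 1) =
      Polynomial.X * hermitePoly C n - C • Polynomial.derivative (hermitePoly C n) from rfl]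
    simp only [← Nat.cast_smul_eq_nsmul ℝ]
    push_cast
    rw [mul_smul_comm, smul_comm C, one_mul]
    module

lemma H_zero (x C : ℝ) : H 0 x C = 1 := by simp [H, hermitePoly]

lemma H_one (x C : ℝ) : H 1 x C = x := by simp [H, hermitePoly]

lemma H_rec (C : ℝ) (l : ℕ) (x : ℝ) :
    H (l + 2) x C = x * H (l + 1) x C - C * (l + 1) * H l x C := by
  have : hermitePoly C (l + 2) =
      Polynomial.X * hermitePoly C (l+1) - C • Polynomial.derivative (hermitePoly C (l+1)) := rfl
  rw [H, this, hermite_deriv]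
  simp [H]
  ring

lemma H_mul (C : ℝ) (j : ℕ) (y : ℝ) :
    y * H j y C = H (j + 1) y C + C * j * H (j - 1) y C := by
  cases j with
  | zero => simp [H_zero, H_one]
  | succ l => rw [H_rec]; push_cast; ring

lemma H_add (C : ℝ) : ∀ m : ℕ, ∀ x y : ℝ,
    H m (x + y) C = ∑ j ∈ Finset.range (m + 1), (m.choose j : ℝ) * x ^ (m - j) * H j y C := by
  intro m
  induction m using Nat.strong_induction_on with
  | _ m ih =>
    match m with
    | 0 => intro x y; simp [H_zero]
    | 1 =>
      intro x y
      simp [Finset.sum_range_succ, H_zero, H_one]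
    | (l+2) =>
      intro x y
      have ih1 := ih (l+1) (by omega) x y
      have ih0 := ih l (by omega) x y
      rw [H_rec, ih1, ih0]
      have hxA : x * (∑ j ∈ Finset.range (l+2), ((l+1).choose j : ℝ) * x ^ (l+1-j) * H j y C)
          = ∑ j ∈ Finset.range (l+2), ((l+1).choose j : ℝ) * x ^ (l+2-j) * H j y C := by
        rw [Finset.mul_sum]
        refine Finset.sum_congr rfl fun j hj => ?_
        have hj' : j < l + 2 := Finset.mem_range.mp hj
        have h2 : l + 2 - j = (l + 1 - j) + 1 := by omega
        rw [h2, pow_succ]; ring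
      have hyA : y * (∑ j ∈ Finset.range (l+2), ((l+1).choose j : ℝ) * x ^ (l+1-j) * H j y C)
          = (∑ j ∈ Finset.range (l+2), ((l+1).choose j : ℝ) * x ^ (l+1-j) * H (j+1) y C)
            + C * ∑ j ∈ Finset.range (l+2),
                (j:ℝ) * ((l+1).choose j : ℝ) * x ^ (l+1-j) * H (j-1) y C := by
        rw [Finset.mul_sum, Finset.mul_sum, ← Finset.sum_add_distrib]
        refine Finset.sum_congr rfl fun j hj => ?_
        linear_combination (((l+1).choose j : ℝ) * x ^ (l+1-j)) * H_mul C j y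
      have hS2 : (∑ j ∈ Finset.range (l+2),
            (j:ℝ) * ((l+1).choose j : ℝ) * x ^ (l+1-j) * H (j-1) y C)
          = ((l:ℝ)+1) * ∑ j ∈ Finset.range (l+1), (l.choose j : ℝ) * x ^ (l-j) * H j y C := by
        rw [Finset.sum_range_succ', Finset.mul_sum]
        simp only [Nat.cast_zero, zero_mul, add_zero, Nat.succ_sub_succ]
        refine Finset.sum_congr rfl fun j hj => ?_
        have key : ((l+1) : ℕ) * (l.choose j) = ((l+1).choose (j+1)) * (j+1) :=
          Nat.add_one_mul_choose_eq l j
        have keyR : ((l:ℝ)+1) * (l.choose j : ℝ) = ((l+1).choose (j+1) : ℝ) * ((j:ℝ)+1) := by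
          exact_mod_cast congrArg (Nat.cast (R := ℝ)) key
        simp only [Nat.sub_zero]
        push_cast
        linear_combination (- x ^ (l - j) * H j y C) * keyR
      have hT : (∑ j ∈ Finset.range (l+3), ((l+2).choose j : ℝ) * x ^ (l+2-j) * H j y C)
          = (∑ j ∈ Finset.range (l+2), ((l+1).choose j : ℝ) * x ^ (l+1-j) * H (j+1) y C)
            + ∑ j ∈ Finset.range (l+2), ((l+1).choose j : ℝ) * x ^ (l+2-j) * H j y C := by
        rw [Finset.sum_range_succ' (fun j => ((l+2).choose j : ℝ) * x ^ (l+2-j) * H j y C) (l+2),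
          Finset.sum_range_succ' (fun j => ((l+1).choose j : ℝ) * x ^ (l+2-j) * H j y C) (l+1)]
        simp only [Nat.succ_sub_succ, Nat.choose_zero_right, Nat.cast_one, Nat.sub_zero]
        have hsplit : ∀ j ∈ Finset.range (l+2),
            ((l+2).choose (j+1) : ℝ) * x ^ (l+1-j) * H (j+1) y C
            = ((l+1).choose j : ℝ) * x ^ (l+1-j) * H (j+1) y C
              + ((l+1).choose (j+1) : ℝ) * x ^ (l+1-j) * H (j+1) y C := by
          intro j hj
          have : ((l+2).choose (j+1)) = (l+1).choose j + (l+1).choose (j+1) :=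
            Nat.choose_succ_succ (l+1) j
          rw [this]; push_cast; ring
        rw [Finset.sum_congr rfl hsplit, Finset.sum_add_distrib]
        have hlast : (∑ j ∈ Finset.range (l+2), ((l+1).choose (j+1) : ℝ) * x ^ (l+1-j) * H (j+1) y C)
            = ∑ j ∈ Finset.range (l+1), ((l+1).choose (j+1) : ℝ) * x ^ (l+1-j) * H (j+1) y C := by
          rw [Finset.sum_range_succ]
          simp [Nat.choose_succ_self]
        rw [hlast]
        ring
      linear_combination hxA + hyA + C * hS2 - hT

lemma sum_Icc_one (i : ℕ) (f : ℕ → ℝ) :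
    ∑ j ∈ Finset.Icc 1 i, f j = ∑ j ∈ Finset.range i, f (j + 1) := by
  rw [← Finset.Ico_add_one_right_eq_Icc, Finset.sum_Ico_eq_sum_range]
  norm_num
  exact Finset.sum_congr rfl fun j _ => by rw [add_comm]

/-- Algebraic content of the Wick-renormalised decomposition
`:F(t, b + y): − F(t, b) = a·y + Â₁·:y: + Σ_{j=2}^n Â_j·:y^j:`. -/
theorem wick_decomposition (n : ℕ) (hn : 1 ≤ n) (A : ℕ → ℝ) (b c y C : ℝ) (hC : 0 ≤ C) :
    (∑ i ∈ Finset.range (n + 1), A i * H i (b + y) C) -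
        (∑ i ∈ Finset.range (n + 1), A i * b ^ i) =
      (∑ i ∈ Finset.Icc 1 n, (i : ℝ) * A i * c ^ (i - 1)) * y +
        (∑ i ∈ Finset.Icc 2 n, (i : ℝ) * A i * (b ^ (i - 1) - c ^ (i - 1))) * H 1 y C +
        ∑ j ∈ Finset.Icc 2 n,
          (∑ i ∈ Finset.Icc j n, (i.choose j : ℝ) * A i * b ^ (i - j)) * H j y C := by
  -- Left-hand side
  have hL : (∑ i ∈ Finset.range (n + 1), A i * H i (b + y) C) -
        (∑ i ∈ Finset.range (n + 1), A i * b ^ i)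
      = ∑ j ∈ Finset.Icc 1 n,
          (∑ i ∈ Finset.Icc j n, (i.choose j : ℝ) * A i * b ^ (i - j)) * H j y C := by
    have hstep : ∀ i ∈ Finset.range (n + 1),
        A i * H i (b + y) C - A i * b ^ i
          = ∑ j ∈ Finset.Icc 1 i, (i.choose j : ℝ) * A i * b ^ (i - j) * H j y C := by
      intro i _
      rw [H_add, Finset.mul_sum, sum_Icc_one, Finset.sum_range_succ']
      simp only [Nat.choose_zero_right, Nat.cast_one, one_mul, Nat.sub_zero, H_zero, mul_one]
      rw [add_sub_cancel_right]
      exact Finset.sum_congr rfl fun j _ => by ring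
    rw [← Finset.sum_sub_distrib, Finset.sum_congr rfl hstep]
    rw [Finset.sum_comm' (t' := Finset.Icc 1 n) (s' := fun j => Finset.Icc j n)
      (by intro i j; simp only [Finset.mem_range, Finset.mem_Icc]; omega)]
    exact Finset.sum_congr rfl fun j _ => (Finset.sum_mul _ _ _).symm
  rw [hL]
  -- Right-hand side
  have hins : Finset.Icc 1 n = insert 1 (Finset.Icc 2 n) := by
    ext k; simp only [Finset.mem_Icc, Finset.mem_insert]; omega
  have h1mem : 1 ∉ Finset.Icc 2 n := by simp
  rw [hins, Finset.sum_insert h1mem, Finset.sum_insert h1mem, H_one]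
  simp only [Nat.choose_one_right, Nat.choose_self]
  have hcomb : (∑ i ∈ Finset.Icc 2 n, (i : ℝ) * A i * c ^ (i - 1)) * y +
        (∑ i ∈ Finset.Icc 2 n, (i : ℝ) * A i * (b ^ (i - 1) - c ^ (i - 1))) * y
      = (∑ i ∈ Finset.Icc 2 n, (i : ℝ) * A i * b ^ (i - 1)) * y := by
    rw [← add_mul, ← Finset.sum_add_distrib]
    congr 1
    exact Finset.sum_congr rfl fun i _ => by ring
  have hIcc2 : ∀ i ∈ Finset.Icc 2 n, ((i.choose 1 : ℕ) : ℝ) * A i * b ^ (i - 1)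
      = (i : ℝ) * A i * b ^ (i - 1) := by
    intro i _; rw [Nat.choose_one_right]
  rw [hins, Finset.sum_insert h1mem]
  push_cast
  linear_combination -hcomb
end
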